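/- Let n ≥ 2, α ≥ 0, β > 0, γ ∈ ℝ, and let f = (f¹,…,fⁿ) : [0,∞) → ℝⁿ be a continuous function with 0 ≤ f¹_t ≤ … ≤ fⁿ_t for all t ≥ 0 and such that 0 ≤ f¹_t < f²_t < … < fⁿ_t for Lebesgue-almost every t ≥ 0. Assume that for every i ∈ {1,…,n} and every t ≥ 0, ∫₀ᵗ | α − 2γ f^i_s + β ∑_{j≠i} (f^i_s + f^j_s)/(f^i_s − f^j_s) | ds < ∞. Then for all indices 1 ≤ l < i ≤ n and all t ≥ 0, ∫₀ᵗ f^i_s / (f^i_s − f^l_s) ds < ∞. -/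

import Mathlib

/-!
On a configuration `0 ≤ x 0 < ⋯ < x (n-1)`, every summand `(x i + x j) / (x i - x j)` of the drift
with `j < i` is nonnegative, and the one with `j = l` dominates `x i / (x i - x l)`; every summand
with `j > i` is at least `-2 x j / (x j - x i)`. Solving the drift for the sum over `j < i` hence
bounds `x i / (x i - x l)` by `|drift| / β`, a term linear in `x i`, and the interaction terms
`x j / (x j - x i)` of the higher indices `j > i`. Integrability therefore propagates by downward
induction on `i`, the top index having no higher ones.
-/

open MeasureTheory Finset

noncomputable def drift {n : ℕ} (α β γ : ℝ) (x : Fin n → ℝ) (i : Fin n) : ℝ :=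
  α - 2 * γ * x i + β * ∑ j ∈ univ.erase i, (x i + x j) / (x i - x j)

theorem measurable_drift {n : ℕ} (α β γ : ℝ) (i : Fin n) :
    Measurable fun x : Fin n → ℝ => drift α β γ x i := by
  unfold drift
  fun_prop

theorem sum_erase_eq_sum_Iio_add_sum_Ioi {ι M : Type*} [Fintype ι] [LinearOrder ι]
    [LocallyFiniteOrderTop ι] [LocallyFiniteOrderBot ι] [AddCommMonoid M] (i : ι) (g : ι → M) :
    ∑ j ∈ univ.erase i, g j = ∑ j ∈ Iio i, g j + ∑ j ∈ Ioi i, g j := by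
  rw [← compl_singleton, ← Ioi_disjUnion_Iio, sum_disjUnion, add_comm]

section Ordered

variable {n : ℕ} {x : Fin n → ℝ}

theorem div_sub_le_sum_Iio (h0 : ∀ j, 0 ≤ x j) (hx : StrictMono x) {l i : Fin n} (hli : l < i) :
    x i / (x i - x l) ≤ ∑ j ∈ Iio i, (x i + x j) / (x i - x j) := by
  have hterm : ∀ j ∈ Iio i, 0 ≤ (x i + x j) / (x i - x j) := fun j hj =>
    div_nonneg (add_nonneg (h0 i) (h0 j)) (sub_pos.2 (hx (mem_Iio.1 hj))).le
  calc x i / (x i - x l) ≤ (x i + x l) / (x i - x l) :=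
        div_le_div_of_nonneg_right (by linarith [h0 l]) (sub_pos.2 (hx hli)).le
    _ ≤ _ := single_le_sum hterm (mem_Iio.2 hli)

theorem neg_sum_Ioi_le (hx : StrictMono x) (i : Fin n) :
    -∑ j ∈ Ioi i, (x i + x j) / (x i - x j) ≤ 2 * ∑ j ∈ Ioi i, x j / (x j - x i) := by
  rw [← sum_neg_distrib, mul_sum]
  refine sum_le_sum fun j hj => ?_
  have hij : x i < x j := hx (mem_Ioi.1 hj)
  rw [← div_neg, neg_sub, mul_div_assoc']
  exact div_le_div_of_nonneg_right (by linarith) (sub_pos.2 hij).le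

theorem div_sub_le_of_drift (h0 : ∀ j, 0 ≤ x j) (hx : StrictMono x) {l i : Fin n} (hli : l < i)
    (α γ : ℝ) {β : ℝ} (hβ : 0 < β) :
    x i / (x i - x l) ≤ β⁻¹ * (|drift α β γ x i| + |α| + 2 * |γ| * x i)
      + 2 * ∑ j ∈ Ioi i, x j / (x j - x i) := by
  set below := ∑ j ∈ Iio i, (x i + x j) / (x i - x j)
  set above := ∑ j ∈ Ioi i, (x i + x j) / (x i - x j)
  set T := ∑ j ∈ Ioi i, x j / (x j - x i)
  have hdrift : drift α β γ x i = α - 2 * γ * x i + β * (below + above) := by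
    rw [drift, sum_erase_eq_sum_Iio_add_sum_Ioi]
  have hγ : γ * x i ≤ |γ| * x i := mul_le_mul_of_nonneg_right (le_abs_self γ) (h0 i)
  have habove : β * -above ≤ β * (2 * T) :=
    mul_le_mul_of_nonneg_left (neg_sum_Ioi_le hx i) hβ.le
  have hbelow : β * below ≤ |drift α β γ x i| + |α| + 2 * |γ| * x i + β * (2 * T) := by
    linarith [le_abs_self (drift α β γ x i), neg_abs_le α]
  calc x i / (x i - x l) ≤ below := div_sub_le_sum_Iio h0 hx hli
    _ = β⁻¹ * (β * below) := (inv_mul_cancel_left₀ hβ.ne' _).symm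
    _ ≤ β⁻¹ * (|drift α β γ x i| + |α| + 2 * |γ| * x i + β * (2 * T)) := by gcongr
    _ = _ := by rw [mul_add, inv_mul_cancel_left₀ hβ.ne']

end Ordered

theorem integrable_div_sub_of_integrable_drift {X : Type*} [MeasurableSpace X] {μ : Measure X}
    [IsFiniteMeasure μ] {n : ℕ} {f : X → Fin n → ℝ} (hf : ∀ j, Integrable (fun s => f s j) μ)
    (hord : ∀ᵐ s ∂μ, (∀ j, 0 ≤ f s j) ∧ StrictMono (f s)) (α γ : ℝ) {β : ℝ} (hβ : 0 < β)
    (hdrift : ∀ i, Integrable (fun s => drift α β γ (f s) i) μ) {l i : Fin n} (hli : l < i) :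
    Integrable (fun s => f s i / (f s i - f s l)) μ := by
  induction i using WellFoundedGT.induction generalizing l with
  | _ i ih =>
  have hmeas : AEStronglyMeasurable (fun s => f s i / (f s i - f s l)) μ :=
    ((hf i).aemeasurable.div ((hf i).aemeasurable.sub (hf l).aemeasurable)).aestronglyMeasurable
  have hbound : Integrable (fun s => β⁻¹ * (|drift α β γ (f s) i| + |α| + 2 * |γ| * f s i)
      + 2 * ∑ j ∈ Ioi i, f s j / (f s j - f s i)) μ :=
    ((((hdrift i).abs.add (integrable_const _)).add ((hf i).const_mul _)).const_mul _).add
      ((integrable_finsetSum _ fun j hj => ih j (mem_Ioi.1 hj) (mem_Ioi.1 hj)).const_mul 2)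
  refine hbound.mono' hmeas ?_
  filter_upwards [hord] with s ⟨h0, hs⟩
  rw [Real.norm_eq_abs, abs_of_nonneg (div_nonneg (h0 i) (sub_pos.2 (hs hli)).le)]
  exact div_sub_le_of_drift h0 hs hli α γ hβ

/-- The termwise conclusion from the proof of Lemma 3.2 of the paper:
integrability of the full drift of the eigenvalue SDE along a continuous
ordered trajectory implies integrability of each pairwise interaction
term `f^i / (f^i - f^l)` for `l < i`. -/
theorem stmt_1 (n : ℕ) (hn : 2 ≤ n) (α β γ : ℝ) (hβ : 0 < β)
    (f : ℝ → Fin n → ℝ)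
    (hcont : ContinuousOn f (Set.Ici 0))
    (hstrict : ∀ᵐ t ∂(volume.restrict (Set.Ici (0:ℝ))),
      0 ≤ f t ⟨0, by omega⟩ ∧ StrictMono (f t))
    (hdrift : ∀ i : Fin n, ∀ t : ℝ, 0 ≤ t →
      (∫⁻ s in Set.Ioc (0:ℝ) t,
        ENNReal.ofReal
          |α - 2*γ*(f s i) + β * ∑ j ∈ Finset.univ.erase i,
              (f s i + f s j) / (f s i - f s j)|) < ⊤) :
    ∀ l i : Fin n, l < i → ∀ t : ℝ, 0 ≤ t →
      (∫⁻ s in Set.Ioc (0:ℝ) t,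
        ENNReal.ofReal (f s i / (f s i - f s l))) < ⊤ := by
  intro l i hli t ht
  have hf : ∀ j, Integrable (fun s => f s j) (volume.restrict (Set.Ioc 0 t)) := fun j =>
    (((continuousOn_pi.1 hcont j).mono Set.Icc_subset_Ici_self).integrableOn_Icc).mono_set
      Set.Ioc_subset_Icc_self
  have hord : ∀ᵐ s ∂(volume.restrict (Set.Ioc 0 t)), (∀ j, 0 ≤ f s j) ∧ StrictMono (f s) := by
    filter_upwards [ae_restrict_of_ae_restrict_of_subset (fun s hs => hs.1.le) hstrict]
      with s ⟨h0, hs⟩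
    exact ⟨fun j => h0.trans (hs.monotone (Nat.zero_le j)), hs⟩
  have hD : ∀ i, Integrable (fun s => drift α β γ (f s) i) (volume.restrict (Set.Ioc 0 t)) :=
    fun i => ⟨((measurable_drift α β γ i).comp_aemeasurable
        (aemeasurable_pi_lambda _ fun j => (hf j).aemeasurable)).aestronglyMeasurable,
      (hasFiniteIntegral_iff_norm _).2 (hdrift i t ht)⟩
  exact (integrable_div_sub_of_integrable_drift hf hord α γ hβ hD hli).lintegral_lt_top
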